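/- arXiv:2011.08105 — 2 statements merged into one kernel-verified Lean document; each statement's English description precedes it below -/
import Mathlib

section
/- Consider dynamics ẋ(t) = A x(t) + B u(t) + G w(t) with ‖w(t)‖₂ ≤ ‖C x(t) + D u(t)‖₂, P symmetric positive definite, V(x) = xᵀPx, and α > 0. For fixed x with GᵀPx ≠ 0, if u satisfies ‖Cx + Du‖₂ ≤ (-xᵀPBu)/‖GᵀPx‖₂ - xᵀ(2PA + αP)x/(2‖GᵀPx‖₂), then for every w with ‖w‖₂ ≤ ‖Cx + Du‖₂, the resulting derivative V̇ = 2xᵀP(Ax + Bu + Gw) satisfies V̇ ≤ -αV(x). -/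
open Matrix

noncomputable def norm2 {n : ℕ} (v : Fin n → ℝ) : ℝ := Real.sqrt (v ⬝ᵥ v)

lemma norm2_nonneg {n : ℕ} (v : Fin n → ℝ) : 0 ≤ norm2 v := Real.sqrt_nonneg _

lemma norm2_pos {n : ℕ} {v : Fin n → ℝ} (h : v ≠ 0) : 0 < norm2 v := by
  have h1 : 0 < v ⬝ᵥ v := by
    rcases lt_or_eq_of_le (Finset.sum_nonneg (fun i _ => mul_self_nonneg (v i))) with h2 | h2
    · exact h2
    · exact absurd ((dotProduct_self_eq_zero).mp h2.symm) h
  exact Real.sqrt_pos.mpr h1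

lemma dot_le_norm2 {n : ℕ} (v w : Fin n → ℝ) : v ⬝ᵥ w ≤ norm2 v * norm2 w := by
  have h := Finset.sum_mul_sq_le_sq_mul_sq Finset.univ v w
  have hvv : ∀ (f : Fin n → ℝ), f ⬝ᵥ f = ∑ i, f i ^ 2 := by
    intro f; simp [dotProduct, sq]
  calc v ⬝ᵥ w ≤ |v ⬝ᵥ w| := le_abs_self _
    _ = Real.sqrt ((v ⬝ᵥ w) ^ 2) := (Real.sqrt_sq_eq_abs _).symm
    _ ≤ Real.sqrt ((∑ i, v i ^ 2) * ∑ i, w i ^ 2) := by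
        apply Real.sqrt_le_sqrt
        simpa [dotProduct] using h
    _ = norm2 v * norm2 w := by
        rw [Real.sqrt_mul (by positivity)]
        simp [norm2, hvv]

theorem nldi_safe_set_correct {s a d k : ℕ}
    (A : Matrix (Fin s) (Fin s) ℝ) (B : Matrix (Fin s) (Fin a) ℝ)
    (G : Matrix (Fin s) (Fin d) ℝ) (C : Matrix (Fin k) (Fin s) ℝ)
    (D : Matrix (Fin k) (Fin a) ℝ)
    (P : Matrix (Fin s) (Fin s) ℝ) (hP : P.PosDef) (α : ℝ) (hα : 0 < α)
    (x : Fin s → ℝ) (hx : Gᵀ *ᵥ (P *ᵥ x) ≠ 0)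
    (u : Fin a → ℝ)
    (hu : norm2 (C *ᵥ x + D *ᵥ u) ≤
      (-(x ⬝ᵥ (P *ᵥ (B *ᵥ u)))) / norm2 (Gᵀ *ᵥ (P *ᵥ x))
        - (x ⬝ᵥ (((2 : ℝ) • (P * A) + α • P) *ᵥ x)) / (2 * norm2 (Gᵀ *ᵥ (P *ᵥ x)))) :
    ∀ w : Fin d → ℝ, norm2 w ≤ norm2 (C *ᵥ x + D *ᵥ u) →
      2 * (x ⬝ᵥ (P *ᵥ (A *ᵥ x + B *ᵥ u + G *ᵥ w))) ≤ -α * (x ⬝ᵥ (P *ᵥ x)) := by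
  intro w hw
  set g := Gᵀ *ᵥ (P *ᵥ x) with hg
  have hng : 0 < norm2 g := norm2_pos hx
  -- rewrite xᵀ P G w = g ⬝ᵥ w
  have hPsymm : Pᵀ = P := hP.1
  have key : x ⬝ᵥ (P *ᵥ (G *ᵥ w)) = g ⬝ᵥ w := by
    rw [hg, Matrix.dotProduct_mulVec, ← Matrix.mulVec_transpose,
        Matrix.dotProduct_mulVec (Pᵀ *ᵥ x), ← Matrix.mulVec_transpose, hPsymm]
  have hPA : x ⬝ᵥ (((2 : ℝ) • (P * A) + α • P) *ᵥ x)
      = 2 * (x ⬝ᵥ (P *ᵥ (A *ᵥ x))) + α * (x ⬝ᵥ (P *ᵥ x)) := by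
    rw [Matrix.add_mulVec, dotProduct_add, Matrix.smul_mulVec,
        Matrix.smul_mulVec, dotProduct_smul, dotProduct_smul,
        Matrix.mulVec_mulVec]
    simp [mul_comm]
  -- from hu
  have hu' : norm2 (C *ᵥ x + D *ᵥ u) * norm2 g ≤
      -(x ⬝ᵥ (P *ᵥ (B *ᵥ u))) - (2 * (x ⬝ᵥ (P *ᵥ (A *ᵥ x))) + α * (x ⬝ᵥ (P *ᵥ x))) / 2 := by
    have := mul_le_mul_of_nonneg_right hu (le_of_lt hng)
    rw [sub_mul, div_mul_eq_mul_div, mul_div_assoc, div_self hng.ne', mul_one] at this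
    calc norm2 (C *ᵥ x + D *ᵥ u) * norm2 g ≤ _ := this
      _ = _ := by rw [hPA]; field_simp
  have hgw : g ⬝ᵥ w ≤ norm2 (C *ᵥ x + D *ᵥ u) * norm2 g := by
    calc g ⬝ᵥ w ≤ norm2 g * norm2 w := dot_le_norm2 g w
      _ ≤ norm2 (C *ᵥ x + D *ᵥ u) * norm2 g := by
          rw [mul_comm]; exact mul_le_mul_of_nonneg_right hw (le_of_lt hng)
  have expand : x ⬝ᵥ (P *ᵥ (A *ᵥ x + B *ᵥ u + G *ᵥ w))
      = x ⬝ᵥ (P *ᵥ (A *ᵥ x)) + x ⬝ᵥ (P *ᵥ (B *ᵥ u)) + g ⬝ᵥ w := by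
    rw [Matrix.mulVec_add, Matrix.mulVec_add, dotProduct_add, dotProduct_add, key]
  rw [expand]
  nlinarith [hgw, hu']
end

section
/- Let P ≻ 0, R ≻ 0, Q ⪰ 0, σ > 0, γ > 0, α > 0. Suppose u ∈ ℝᵃ satisfies uᵀ(σR)u + 2(BᵀPx)ᵀu + xᵀ(PA + AᵀP + αP + σQ + PGGᵀP/(σγ²))x ≤ 0. Then with V(x) = xᵀPx and any w ∈ ℝᵈ, taking ẋ = Ax + Bu + Gw, the quantity E = 2xᵀPẋ + αV(x) + σ(xᵀQx + uᵀRu - γ²‖w‖₂²) satisfies E ≤ 0. -/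
/-!
Since `P` is symmetric, the disturbance enters `E` only through the linear term `2 vᵀw`, with
`v = GᵀPx`, and the quadratic term `-σγ²‖w‖²`. Completing the square,
`2 vᵀw - c‖w‖² ≤ vᵀv / c` for `c = σγ² > 0`, with equality at the worst case `w = v / c`; the
right-hand side is exactly the term `xᵀ P G Gᵀ P x / (σγ²)` in the constraint on `u`, so `E` is
bounded by the left-hand side of that constraint for every `w`.
-/

open Matrix

namespace Matrix

section Symmetric

variable {R m n : Type*} [CommSemiring R] [Fintype m] [Fintype n]
  {P : Matrix m m R} (hP : P.IsSymm)
include hP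

theorem IsSymm.dotProduct_mulVec_comm (x y : m → R) : x ⬝ᵥ (P *ᵥ y) = (P *ᵥ x) ⬝ᵥ y := by
  rw [dotProduct_mulVec, ← mulVec_transpose, hP.eq]

theorem IsSymm.dotProduct_mulVec_mulVec (M : Matrix m n R) (x : m → R) (w : n → R) :
    x ⬝ᵥ (P *ᵥ (M *ᵥ w)) = (Mᵀ *ᵥ (P *ᵥ x)) ⬝ᵥ w := by
  rw [hP.dotProduct_mulVec_comm, dotProduct_mulVec, ← mulVec_transpose]

theorem IsSymm.dotProduct_mul_add_transpose_mul_mulVec (A : Matrix m m R) (x : m → R) :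
    x ⬝ᵥ ((P * A + Aᵀ * P) *ᵥ x) = 2 * (x ⬝ᵥ (P *ᵥ (A *ᵥ x))) := by
  rw [add_mulVec, dotProduct_add, ← mulVec_mulVec, ← mulVec_mulVec, dotProduct_transpose_mulVec,
    ← hP.dotProduct_mulVec_comm, two_mul]

theorem IsSymm.dotProduct_mul_mul_transpose_mul_mulVec (G : Matrix m n R) (x : m → R) :
    x ⬝ᵥ ((P * G * Gᵀ * P) *ᵥ x) = (Gᵀ *ᵥ (P *ᵥ x)) ⬝ᵥ (Gᵀ *ᵥ (P *ᵥ x)) := by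
  rw [← mulVec_mulVec, ← mulVec_mulVec, ← mulVec_mulVec, hP.dotProduct_mulVec_mulVec]

end Symmetric

theorem two_mul_dotProduct_le {ι : Type*} [Fintype ι] {c : ℝ} (hc : 0 < c) (v w : ι → ℝ) :
    2 * (v ⬝ᵥ w) ≤ c * (w ⬝ᵥ w) + c⁻¹ * (v ⬝ᵥ v) := by
  have hsq : 0 ≤ (c • w - v) ⬝ᵥ (c • w - v) := by
    simpa using dotProduct_star_self_nonneg (c • w - v)
  have hexp : c * (w ⬝ᵥ w) + c⁻¹ * (v ⬝ᵥ v) - 2 * (v ⬝ᵥ w)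
      = c⁻¹ * ((c • w - v) ⬝ᵥ (c • w - v)) := by
    simp only [sub_dotProduct, dotProduct_sub, smul_dotProduct, dotProduct_smul, smul_eq_mul,
      dotProduct_comm w v]
    field_simp
    ring
  linarith [hexp ▸ mul_nonneg (inv_nonneg.mpr hc.le) hsq]

end Matrix

theorem hinf_safe_set_correct_general {s a d : ℕ}
    (A : Matrix (Fin s) (Fin s) ℝ) (B : Matrix (Fin s) (Fin a) ℝ)
    (G : Matrix (Fin s) (Fin d) ℝ)
    (P Q : Matrix (Fin s) (Fin s) ℝ) (R : Matrix (Fin a) (Fin a) ℝ)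
    (hP : P.PosDef)
    (σ γ α : ℝ) (hσ : 0 < σ) (hγ : 0 < γ)
    (x : Fin s → ℝ) (u : Fin a → ℝ)
    (hu : u ⬝ᵥ ((σ • R) *ᵥ u) + 2 * ((Bᵀ *ᵥ (P *ᵥ x)) ⬝ᵥ u)
        + x ⬝ᵥ ((P * A + Aᵀ * P + α • P + σ • Q + (σ * γ ^ 2)⁻¹ • (P * G * Gᵀ * P)) *ᵥ x) ≤ 0) :
    ∀ w : Fin d → ℝ,
      2 * (x ⬝ᵥ (P *ᵥ (A *ᵥ x + B *ᵥ u + G *ᵥ w))) + α * (x ⬝ᵥ (P *ᵥ x))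
        + σ * (x ⬝ᵥ (Q *ᵥ x) + u ⬝ᵥ (R *ᵥ u) - γ ^ 2 * (w ⬝ᵥ w)) ≤ 0 := by
  intro w
  have hPs : P.IsSymm := isHermitian_iff_isSymm.mp hP.isHermitian
  set v := Gᵀ *ᵥ (P *ᵥ x)
  have hu_scalar : σ * (u ⬝ᵥ (R *ᵥ u)) + 2 * (x ⬝ᵥ (P *ᵥ (B *ᵥ u))) + 2 * (x ⬝ᵥ (P *ᵥ (A *ᵥ x)))
      + α * (x ⬝ᵥ (P *ᵥ x)) + σ * (x ⬝ᵥ (Q *ᵥ x)) + (σ * γ ^ 2)⁻¹ * (v ⬝ᵥ v) ≤ 0 := by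
    rw [hPs.dotProduct_mulVec_mulVec, ← hPs.dotProduct_mul_add_transpose_mul_mulVec,
      ← hPs.dotProduct_mul_mul_transpose_mul_mulVec]
    simp only [add_mulVec, smul_mulVec, dotProduct_add, dotProduct_smul, smul_eq_mul] at hu ⊢
    linarith
  have worst_case := two_mul_dotProduct_le (by positivity : 0 < σ * γ ^ 2) v w
  rw [mulVec_add, mulVec_add, dotProduct_add, dotProduct_add, hPs.dotProduct_mulVec_mulVec G]
  linarith

theorem hinf_safe_set_correct {s a d : ℕ}
    (A : Matrix (Fin s) (Fin s) ℝ) (B : Matrix (Fin s) (Fin a) ℝ)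
    (G : Matrix (Fin s) (Fin d) ℝ)
    (P Q : Matrix (Fin s) (Fin s) ℝ) (R : Matrix (Fin a) (Fin a) ℝ)
    (hP : P.PosDef) (hR : R.PosDef) (hQ : Q.PosSemidef)
    (σ γ α : ℝ) (hσ : 0 < σ) (hγ : 0 < γ) (hα : 0 < α)
    (x : Fin s → ℝ) (u : Fin a → ℝ)
    (hu : u ⬝ᵥ ((σ • R) *ᵥ u) + 2 * ((Bᵀ *ᵥ (P *ᵥ x)) ⬝ᵥ u)
        + x ⬝ᵥ ((P * A + Aᵀ * P + α • P + σ • Q + (σ * γ ^ 2)⁻¹ • (P * G * Gᵀ * P)) *ᵥ x) ≤ 0) :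
    ∀ w : Fin d → ℝ,
      2 * (x ⬝ᵥ (P *ᵥ (A *ᵥ x + B *ᵥ u + G *ᵥ w))) + α * (x ⬝ᵥ (P *ᵥ x))
        + σ * (x ⬝ᵥ (Q *ᵥ x) + u ⬝ᵥ (R *ᵥ u) - γ ^ 2 * (w ⬝ᵥ w)) ≤ 0 :=
  hinf_safe_set_correct_general A B G P Q R hP σ γ α hσ hγ x u hu
end
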